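/- arXiv:2308.12665 — 8 statements merged into one kernel-verified Lean document; each statement's English description precedes it below -/
import Mathlib

section
/- Let (X,b) be a connected weighted graph. A pseudo metric ϱ on X is a path pseudo metric (i.e., ϱ = d_w for some weight w) if and only if every pseudo metric σ with σ(x,y) ≤ ϱ(x,y) for all adjacent x,y satisfies σ ≤ ϱ pointwise. -/
open scoped BigOperators

variable {X : Type*}

/-- A weighted graph over a vertex set `X`. -/
structure IsGraph (b : X → X → ℝ) : Prop where
  symm : ∀ x y, b x y = b y x
  nonneg : ∀ x y, 0 ≤ b x y
  loopless : ∀ x, b x x = 0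
  degSummable : ∀ x, Summable (fun y => b x y)

/-- A pseudo metric on `X`. -/
structure IsPseudoMetric (σ : X → X → ℝ) : Prop where
  nonneg : ∀ x y, 0 ≤ σ x y
  refl : ∀ x, σ x x = 0
  symm : ∀ x y, σ x y = σ y x
  triangle : ∀ x y z, σ x z ≤ σ x y + σ y z

/-- `σ` is intrinsic with respect to `b` and `m`:
`∑_y b(x,y) σ(x,y)² ≤ m(x)` for all `x` (with the sum converging). -/
def IsIntrinsic (b : X → X → ℝ) (m : X → ℝ) (σ : X → X → ℝ) : Prop :=
  ∀ x, Summable (fun y => b x y * σ x y ^ 2) ∧ ∑' y, b x y * σ x y ^ 2 ≤ m x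

/-- `γ 0, γ 1, …, γ n` is a path in the graph `b`. -/
def IsPath (b : X → X → ℝ) (γ : ℕ → X) (n : ℕ) : Prop :=
  ∀ i < n, 0 < b (γ i) (γ (i + 1))

/-- The length of the path `γ 0, …, γ n` with respect to the weight `w`. -/
noncomputable def pathLen (w : X → X → ℝ) (γ : ℕ → X) (n : ℕ) : ℝ :=
  ∑ i ∈ Finset.range n, min (w (γ i) (γ (i + 1))) (w (γ (i + 1)) (γ i))

/-- The path pseudo metric induced by the weight `w`. -/
noncomputable def pathDist (b w : X → X → ℝ) (x y : X) : ℝ :=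
  sInf {L | ∃ n γ, IsPath b γ n ∧ γ 0 = x ∧ γ n = y ∧ L = pathLen w γ n}

/-- The graph `b` is connected. -/
def GraphConnected (b : X → X → ℝ) : Prop :=
  ∀ x y : X, ∃ n γ, IsPath b γ n ∧ γ 0 = x ∧ γ n = y

/-- The graph `b` is locally finite. -/
def LocFin (b : X → X → ℝ) : Prop := ∀ x, {y | 0 < b x y}.Finite

/-- The canonical pseudo metric: the pointwise supremum of all intrinsic pseudo metrics. -/
noncomputable def kappa (b : X → X → ℝ) (m : X → ℝ) (x y : X) : ℝ :=
  sSup {t | ∃ σ, IsPseudoMetric σ ∧ IsIntrinsic b m σ ∧ t = σ x y}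

/-- `b` is a star graph with center `p`: it is connected and every vertex
different from `p` has exactly one neighbor. -/
def IsStarCenter (b : X → X → ℝ) (p : X) : Prop :=
  GraphConnected b ∧ ∀ x, x ≠ p → ∃! y, 0 < b x y


section AuxStmt2

lemma pathLen_nonneg' {w : X → X → ℝ} (hw : ∀ x y, 0 ≤ w x y) (γ : ℕ → X) (n : ℕ) :
    0 ≤ pathLen w γ n :=
  Finset.sum_nonneg fun _ _ => le_min (hw _ _) (hw _ _)

lemma pathSet_nonempty' {b : X → X → ℝ} (hconn : GraphConnected b) (w : X → X → ℝ) (x y : X) :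
    {L | ∃ n γ, IsPath b γ n ∧ γ 0 = x ∧ γ n = y ∧ L = pathLen w γ n}.Nonempty := by
  obtain ⟨n, γ, h1, h2, h3⟩ := hconn x y
  exact ⟨_, n, γ, h1, h2, h3, rfl⟩

lemma pathSet_bdd' {b w : X → X → ℝ} (hw : ∀ x y, 0 ≤ w x y) (x y : X) :
    BddBelow {L | ∃ n γ, IsPath b γ n ∧ γ 0 = x ∧ γ n = y ∧ L = pathLen w γ n} := by
  refine ⟨0, ?_⟩
  rintro L ⟨n, γ, -, -, -, rfl⟩
  exact pathLen_nonneg' hw γ n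

lemma chain_le' {σ : X → X → ℝ} (hσ : IsPseudoMetric σ) (γ : ℕ → X) (n : ℕ) :
    σ (γ 0) (γ n) ≤ ∑ i ∈ Finset.range n, σ (γ i) (γ (i + 1)) := by
  induction n with
  | zero => simp [hσ.refl]
  | succ n ih =>
    rw [Finset.sum_range_succ]
    calc σ (γ 0) (γ (n + 1)) ≤ σ (γ 0) (γ n) + σ (γ n) (γ (n + 1)) := hσ.triangle _ _ _
      _ ≤ _ := by linarith

lemma pathLen_reverse' (w : X → X → ℝ) (γ : ℕ → X) (n : ℕ) :
    pathLen w (fun i => γ (n - i)) n = pathLen w γ n := by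
  unfold pathLen
  conv_rhs => rw [← Finset.sum_range_reflect]
  refine Finset.sum_congr rfl fun i hi => ?_
  have hi' := Finset.mem_range.mp hi
  have h1 : n - i = (n - 1 - i) + 1 := by omega
  have h2 : n - (i + 1) = n - 1 - i := by omega
  simp only [h1, h2, min_comm]

lemma exists_concat' {b w : X → X → ℝ} {x y z : X} {n m : ℕ} {γ1 γ2 : ℕ → X}
    (h1 : IsPath b γ1 n) (h2 : IsPath b γ2 m) (e1 : γ1 0 = x) (e2 : γ1 n = y)
    (e3 : γ2 0 = y) (e4 : γ2 m = z) :
    ∃ γ, IsPath b γ (n + m) ∧ γ 0 = x ∧ γ (n + m) = z ∧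
      pathLen w γ (n + m) = pathLen w γ1 n + pathLen w γ2 m := by
  refine ⟨fun i => if i < n then γ1 i else γ2 (i - n), ?_, ?_, ?_, ?_⟩
  all_goals
    have hA : ∀ i ≤ n, (fun i => if i < n then γ1 i else γ2 (i - n)) i = γ1 i := by
      intro i hi
      show (if i < n then γ1 i else γ2 (i - n)) = γ1 i
      by_cases h : i < n
      · rw [if_pos h]
      · have hin : i = n := by omega
        rw [if_neg h, hin, Nat.sub_self, e3, e2]
    have hB : ∀ i, n ≤ i → (fun i => if i < n then γ1 i else γ2 (i - n)) i = γ2 (i - n) := by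
      intro i hi
      show (if i < n then γ1 i else γ2 (i - n)) = γ2 (i - n)
      rw [if_neg (Nat.not_lt.mpr hi)]
  · intro i hi
    by_cases h : i < n
    · rw [hA i h.le, hA (i + 1) h]
      exact h1 i h
    · rw [hB i (by omega), hB (i + 1) (by omega)]
      have e : i + 1 - n = (i - n) + 1 := by omega
      rw [e]
      exact h2 (i - n) (by omega)
  · rw [hA 0 (Nat.zero_le n)]; exact e1
  · rw [hB (n + m) (by omega)]
    have e : n + m - n = m := by omega
    rw [e]; exact e4
  · unfold pathLen
    rw [Finset.sum_range_add]
    congr 1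
    · refine Finset.sum_congr rfl fun i hi => ?_
      have hi' := Finset.mem_range.mp hi
      rw [hA i hi'.le, hA (i + 1) hi']
    · refine Finset.sum_congr rfl fun i hi => ?_
      have hi' := Finset.mem_range.mp hi
      rw [hB (n + i) (by omega), hB (n + i + 1) (by omega)]
      have e : n + i - n = i := by omega
      have e' : n + i + 1 - n = i + 1 := by omega
      rw [e, e']

lemma pathDist_isPseudoMetric' {b : X → X → ℝ} (hb : IsGraph b)
    (hconn : GraphConnected b) {w : X → X → ℝ} (hw : ∀ x y, 0 ≤ w x y) :
    IsPseudoMetric (pathDist b w) := by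
  have hnn : ∀ x y, 0 ≤ pathDist b w x y := by
    intro x y
    refine le_csInf (pathSet_nonempty' hconn w x y) ?_
    rintro L ⟨n, γ, -, -, -, rfl⟩
    exact pathLen_nonneg' hw γ n
  have hsymm_le : ∀ x y, pathDist b w x y ≤ pathDist b w y x := by
    intro x y
    refine le_csInf (pathSet_nonempty' hconn w y x) ?_
    rintro L ⟨n, γ, hp, h0, hn, rfl⟩
    refine csInf_le (pathSet_bdd' hw x y)
      ⟨n, fun i => γ (n - i), ?_, by simp [hn], by simp [h0], (pathLen_reverse' w γ n).symm⟩
    intro i hi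
    show 0 < b (γ (n - i)) (γ (n - (i + 1)))
    have h1 : n - i = (n - (i + 1)) + 1 := by omega
    rw [h1, hb.symm]
    exact hp _ (by omega)
  refine ⟨hnn, ?_, fun x y => le_antisymm (hsymm_le x y) (hsymm_le y x), ?_⟩
  · intro x
    refine le_antisymm ?_ (hnn x x)
    refine csInf_le (pathSet_bdd' hw x x) ⟨0, fun _ => x, ?_, rfl, rfl, by simp [pathLen]⟩
    intro i hi; omega
  · intro x y z
    have key : ∀ L1 ∈ {L | ∃ n γ, IsPath b γ n ∧ γ 0 = x ∧ γ n = y ∧ L = pathLen w γ n},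
        ∀ L2 ∈ {L | ∃ n γ, IsPath b γ n ∧ γ 0 = y ∧ γ n = z ∧ L = pathLen w γ n},
        pathDist b w x z ≤ L1 + L2 := by
      rintro L1 ⟨n, γ1, hp1, h10, h1n, rfl⟩ L2 ⟨m, γ2, hp2, h20, h2m, rfl⟩
      obtain ⟨γ, hp, hg0, hgn, hlen⟩ := exists_concat' (w := w) hp1 hp2 h10 h1n h20 h2m
      have := csInf_le (pathSet_bdd' hw x z) ⟨n + m, γ, hp, hg0, hgn, rfl⟩
      rw [hlen] at this
      exact this
    have h2 : ∀ L1 ∈ {L | ∃ n γ, IsPath b γ n ∧ γ 0 = x ∧ γ n = y ∧ L = pathLen w γ n},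
        pathDist b w x z - L1 ≤ pathDist b w y z := by
      intro L1 hL1
      refine le_csInf (pathSet_nonempty' hconn w y z) fun L2 hL2 => ?_
      have := key L1 hL1 L2 hL2
      linarith
    have h3 : pathDist b w x z - pathDist b w y z ≤ pathDist b w x y := by
      refine le_csInf (pathSet_nonempty' hconn w x y) fun L1 hL1 => ?_
      have := h2 L1 hL1
      linarith
    linarith

lemma pathDist_le_edge' {b w : X → X → ℝ} (hw : ∀ x y, 0 ≤ w x y) {x y : X}
    (hxy : 0 < b x y) : pathDist b w x y ≤ min (w x y) (w y x) := by
  refine csInf_le (pathSet_bdd' hw x y)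
    ⟨1, fun i => if i = 0 then x else y, ?_, by simp, by simp, by simp [pathLen]⟩
  intro i hi
  have : i = 0 := by omega
  subst this
  simpa using hxy

end AuxStmt2

/-- characterisation of path pseudo metrics. -/
theorem stmt_2 (b ϱ : X → X → ℝ) (hb : IsGraph b) (hconn : GraphConnected b)
    (hϱ : IsPseudoMetric ϱ) :
    (∃ w : X → X → ℝ, (∀ x y, 0 ≤ w x y) ∧ ϱ = pathDist b w) ↔
      (∀ σ : X → X → ℝ, IsPseudoMetric σ →
        (∀ x y, 0 < b x y → σ x y ≤ ϱ x y) → ∀ x y, σ x y ≤ ϱ x y) := by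
  constructor
  · rintro ⟨w, hw, rfl⟩ σ hσ hedge x y
    refine le_csInf (pathSet_nonempty' hconn w x y) ?_
    rintro L ⟨n, γ, hp, h0, hn, rfl⟩
    have hxy : σ x y = σ (γ 0) (γ n) := by rw [h0, hn]
    rw [hxy]
    refine (chain_le' hσ γ n).trans (Finset.sum_le_sum fun i hi => ?_)
    have hi' := Finset.mem_range.mp hi
    exact (hedge _ _ (hp i hi')).trans (pathDist_le_edge' hw (hp i hi'))
  · intro h
    refine ⟨ϱ, hϱ.nonneg, funext fun x => funext fun y => ?_⟩
    refine le_antisymm ?_ ?_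
    · refine le_csInf (pathSet_nonempty' hconn ϱ x y) ?_
      rintro L ⟨n, γ, hp, h0, hn, rfl⟩
      have hxy : ϱ x y = ϱ (γ 0) (γ n) := by rw [h0, hn]
      rw [hxy]
      refine (chain_le' hϱ γ n).trans (le_of_eq ?_)
      unfold pathLen
      exact Finset.sum_congr rfl fun i _ => by rw [hϱ.symm (γ (i + 1)) (γ i), min_self]
    · exact h (pathDist b ϱ) (pathDist_isPseudoMetric' hb hconn hϱ.nonneg)
        (fun u v huv => (pathDist_le_edge' hϱ.nonneg huv).trans (min_le_left _ _)) x y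
end

section
/- Let b be a connected weighted graph over (X,m). Every intrinsic pseudo metric σ satisfies σ(x,y) ≤ √(m(y)/b(x,y)) whenever x ~ y, and consequently σ ≤ d_s where d_s is the path pseudo metric induced by s(x,y) = √(m(y)/b(x,y)) for x ~ y. -/
open scoped BigOperators

variable {X : Type*}

/-- universal bound for intrinsic pseudo metrics. -/
theorem stmt_6 (b : X → X → ℝ) (m : X → ℝ) (σ : X → X → ℝ)
    (hb : IsGraph b) (hconn : GraphConnected b) (hm : ∀ x, 0 < m x)
    (hσ : IsPseudoMetric σ) (hσint : IsIntrinsic b m σ) :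
    (∀ x y, 0 < b x y → σ x y ≤ Real.sqrt (m y / b x y)) ∧
      ∀ x y, σ x y ≤ pathDist b (fun u v => Real.sqrt (m v / b u v)) x y := by
  have key : ∀ x y, 0 < b x y → σ x y ≤ Real.sqrt (m y / b x y) := by
    intro x y hxy
    have hsum := (hσint y).1
    have hterm : b y x * σ y x ^ 2 ≤ ∑' z, b y z * σ y z ^ 2 :=
      Summable.le_tsum hsum x (fun z _ => mul_nonneg (hb.nonneg y z) (sq_nonneg _))
    have h1 : b x y * σ x y ^ 2 ≤ m y := by
      rw [hb.symm x y, hσ.symm x y]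
      exact hterm.trans (hσint y).2
    have h2 : σ x y ^ 2 ≤ m y / b x y := (le_div_iff₀ hxy).mpr (by linarith [h1])
    exact (Real.le_sqrt (hσ.nonneg x y) (div_nonneg (hm y).le hxy.le)).mpr h2
  refine ⟨key, ?_⟩
  have step : ∀ u v, 0 < b u v →
      σ u v ≤ min (Real.sqrt (m v / b u v)) (Real.sqrt (m u / b v u)) := by
    intro u v huv
    refine le_min (key u v huv) ?_
    rw [hσ.symm]
    exact key v u (by rwa [hb.symm v u])
  have main : ∀ n (γ : ℕ → X), IsPath b γ n →
      σ (γ 0) (γ n) ≤ pathLen (fun u v => Real.sqrt (m v / b u v)) γ n := by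
    intro n
    induction n with
    | zero => intro γ _; simp [pathLen, hσ.refl]
    | succ n ih =>
      intro γ hγ
      have h1 := ih γ (fun i hi => hγ i (Nat.lt_succ_of_lt hi))
      have h2 := step (γ n) (γ (n+1)) (hγ n (Nat.lt_succ_self n))
      calc σ (γ 0) (γ (n+1)) ≤ σ (γ 0) (γ n) + σ (γ n) (γ (n+1)) := hσ.triangle _ _ _
        _ ≤ _ := by
            rw [pathLen, Finset.sum_range_succ]
            exact add_le_add h1 h2
  intro x y
  obtain ⟨n, γ, hγ, h0, hn⟩ := hconn x y
  refine le_csInf ⟨pathLen (fun u v => Real.sqrt (m v / b u v)) γ n, n, γ, hγ, h0, hn, rfl⟩ ?_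
  rintro L ⟨n', γ', hγ', h0', hn', rfl⟩
  have := main n' γ' hγ'
  rwa [h0', hn'] at this
end

section
/- Suppose the weighted graph b over (X,m) satisfies inf_{z∈X} (√(m(z)/b(x,z)) + √(m(z)/b(y,z))) = 0 for all x,y ∈ X (with the convention √(m(z)/b(x,z)) = ∞ when b(x,z)=0). Then the only intrinsic pseudo metric on X is the zero pseudo metric. -/
open scoped BigOperators

variable {X : Type*}

/-- graphs without nontrivial intrinsic pseudo metrics. -/
theorem stmt_7 (b : X → X → ℝ) (m : X → ℝ)
    (hb : IsGraph b) (hm : ∀ x, 0 < m x)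
    (h : ∀ x y : X, ∀ ε > (0 : ℝ), ∃ z, 0 < b x z ∧ 0 < b y z ∧
      Real.sqrt (m z / b x z) + Real.sqrt (m z / b y z) < ε) :
    ∀ σ : X → X → ℝ, IsPseudoMetric σ → IsIntrinsic b m σ → ∀ x y, σ x y = 0 := by
  intro σ hσ hint x y
  have key : ∀ u z : X, 0 < b u z → σ u z ≤ Real.sqrt (m z / b u z) := by
    intro u z hbz
    have hsum := (hint z).1
    have hle : b z u * σ z u ^ 2 ≤ ∑' w, b z w * σ z w ^ 2 :=
      Summable.le_tsum hsum u (fun w _ => mul_nonneg (hb.nonneg z w) (sq_nonneg _))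
    have hle2 : b z u * σ z u ^ 2 ≤ m z := hle.trans (hint z).2
    have hbz' : 0 < b z u := by rwa [hb.symm z u]
    have hsq : σ z u ^ 2 ≤ m z / b z u := by
      rw [le_div_iff₀ hbz']; linarith [hle2]
    have : σ z u ≤ Real.sqrt (m z / b z u) :=
      (Real.le_sqrt (hσ.nonneg z u) (div_nonneg (hm z).le hbz'.le)).mpr hsq
    rw [hσ.symm u z, hb.symm u z]
    exact this
  have hlt : ∀ ε > (0:ℝ), σ x y < ε := by
    intro ε hε
    obtain ⟨z, hxz, hyz, hlt⟩ := h x y ε hε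
    calc σ x y ≤ σ x z + σ z y := hσ.triangle x z y
      _ ≤ Real.sqrt (m z / b x z) + Real.sqrt (m z / b y z) := by
          have h1 := key x z hxz
          have h2 := key y z hyz
          rw [hσ.symm z y]; linarith
      _ < ε := hlt
  have h0 : σ x y ≤ 0 := by
    by_contra hpos
    push_neg at hpos
    exact lt_irrefl _ (hlt _ hpos)
  linarith [hσ.nonneg x y]
end

section
/- Let X = ℕ (positive integers), b(i,j) = 1/(i²+j²) for i ≠ j, b(i,i) = 0, and m(i) = 1/i³. Then b is a weighted graph over (X,m) (i.e., the degrees Σ_j b(i,j) are finite) and the only intrinsic pseudo metric with respect to b and m is the trivial one σ = 0. -/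
open scoped BigOperators

variable {X : Type*}

/-- the explicit example on the positive integers with
`b(i,j) = 1/(i²+j²)` and `m(i) = 1/i³` has no nontrivial intrinsic pseudo metric. -/
theorem stmt_8 (b : ℕ+ → ℕ+ → ℝ) (m : ℕ+ → ℝ)
    (hb : ∀ i j, b i j = if i = j then 0 else 1 / ((i : ℝ) ^ 2 + (j : ℝ) ^ 2))
    (hm : ∀ i, m i = 1 / (i : ℝ) ^ 3) :
    (∀ i, Summable (fun j => b i j)) ∧
      ∀ σ : ℕ+ → ℕ+ → ℝ, IsPseudoMetric σ → IsIntrinsic b m σ → ∀ i j, σ i j = 0 := by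
  have hkpos : ∀ k : ℕ+, (0:ℝ) < (k:ℝ) := by
    intro k; exact_mod_cast k.pos
  have hbnn : ∀ i j : ℕ+, 0 ≤ b i j := by
    intro i j
    rw [hb]
    split_ifs with h
    · exact le_refl 0
    · positivity
  constructor
  · intro i
    have hs : Summable (fun j : ℕ+ => 1 / ((j:ℕ):ℝ) ^ 2) := by
      have h1 : Summable (fun n : ℕ => 1 / (n:ℝ) ^ 2) :=
        Real.summable_one_div_nat_pow.mpr one_lt_two
      exact h1.comp_injective PNat.coe_injective
    refine Summable.of_nonneg_of_le (fun j => hbnn i j) (fun j => ?_) hs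
    rw [hb]
    split_ifs with h
    · positivity
    · apply one_div_le_one_div_of_le
      · positivity
      · have := sq_nonneg ((i:ℕ):ℝ)
        push_cast
        nlinarith
  · intro σ hσ hint i j
    set C : ℝ := (i:ℝ) ^ 2 + (j:ℝ) ^ 2 + 1 with hC
    have hCpos : 0 < C := by positivity
    -- key single-term bound
    have key : ∀ k : ℕ+, k ≠ i → k ≠ j → σ i j ≤ 2 * Real.sqrt (C / (k:ℝ)) := by
      intro k hki hkj
      have hk1 : (1:ℝ) ≤ (k:ℝ) := by exact_mod_cast k.one_le
      have bound : ∀ x : ℕ+, k ≠ x → (x:ℝ)^2 + 1 ≤ C → σ x k ≤ Real.sqrt (C / (k:ℝ)) := by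
        intro x hkx hxC
        have h1 : b k x * σ k x ^ 2 ≤ m k := by
          refine le_trans ?_ (hint k).2
          exact Summable.le_tsum (hint k).1 x (fun y _ => mul_nonneg (hbnn k y) (sq_nonneg _))
        rw [hb, hm, if_neg hkx] at h1
        have hK : (0:ℝ) < (k:ℝ)^2 + (x:ℝ)^2 := by positivity
        have h2 : σ k x ^ 2 ≤ ((k:ℝ)^2 + (x:ℝ)^2) / (k:ℝ)^3 := by
          rw [le_div_iff₀ (by positivity)]
          rw [one_div_mul_eq_div, div_le_div_iff₀ hK (by positivity)] at h1
          linarith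
        have h3 : ((k:ℝ)^2 + (x:ℝ)^2) / (k:ℝ)^3 ≤ C / (k:ℝ) := by
          rw [div_le_div_iff₀ (by positivity) (hkpos k)]
          have hk2 : (1:ℝ) ≤ (k:ℝ)^2 := by nlinarith
          have hxk : (x:ℝ)^2 ≤ ((x:ℝ)^2) * (k:ℝ)^2 := by
            nlinarith [mul_le_mul_of_nonneg_left hk2 (sq_nonneg ((x:ℕ):ℝ))]
          have hCk : (k:ℝ)^2 + (x:ℝ)^2 ≤ C * (k:ℝ)^2 := by nlinarith
          nlinarith [mul_le_mul_of_nonneg_right hCk (hkpos k).le]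
        calc σ x k = Real.sqrt (σ x k ^ 2) := (Real.sqrt_sq (hσ.nonneg x k)).symm
          _ ≤ Real.sqrt (C / (k:ℝ)) := Real.sqrt_le_sqrt (by rw [hσ.symm x k]; linarith)
      have hiC : (i:ℝ)^2 + 1 ≤ C := by nlinarith [sq_nonneg ((j:ℝ))]
      have hjC : (j:ℝ)^2 + 1 ≤ C := by nlinarith [sq_nonneg ((i:ℝ))]
      have := hσ.triangle i k j
      have b1 := bound i hki hiC
      have b2 := bound j hkj hjC
      rw [hσ.symm j k] at b2
      linarith
    -- the bound tends to 0
    have t1 : Filter.Tendsto (fun n : ℕ => C / ((n:ℝ) + 1)) Filter.atTop (nhds 0) := by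
      have h0 := (tendsto_const_div_atTop_nhds_zero_nat C).comp (Filter.tendsto_add_atTop_nat 1)
      have heq : (fun n : ℕ => C / ((n:ℝ) + 1)) =
          (fun n : ℕ => C / (n:ℝ)) ∘ (fun a => a + 1) := by
        funext n
        simp only [Function.comp]
        push_cast
        ring_nf
      rw [heq]
      exact h0
    have t2 : Filter.Tendsto (fun n : ℕ => 2 * Real.sqrt (C / ((n:ℝ) + 1)))
        Filter.atTop (nhds 0) := by
      have h := ((Real.continuous_sqrt.tendsto 0).comp t1).const_mul 2
      simpa using h
    have hle : σ i j ≤ 0 := by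
      refine ge_of_tendsto t2 ?_
      filter_upwards [Filter.eventually_ge_atTop (max (i:ℕ) (j:ℕ))] with n hn
      set k : ℕ+ := ⟨n + 1, Nat.succ_pos n⟩ with hk
      have hki : k ≠ i := by
        intro h
        have hi : (i:ℕ) = n + 1 := by rw [← h]; rfl
        have := le_trans (le_max_left (i:ℕ) (j:ℕ)) hn
        omega
      have hkj : k ≠ j := by
        intro h
        have hj : (j:ℕ) = n + 1 := by rw [← h]; rfl
        have := le_trans (le_max_right (i:ℕ) (j:ℕ)) hn
        omega
      have hkr : ((k:ℕ):ℝ) = (n:ℝ) + 1 := by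
        show (((n + 1 : ℕ)):ℝ) = (n:ℝ) + 1
        push_cast
        ring
      have := key k hki hkj
      rw [hkr] at this
      exact this
    exact le_antisymm hle (hσ.nonneg i j)
end

section
/- Let b be a weighted graph over (X,m) and define κ(x,y) = sup{σ(x,y) : σ intrinsic pseudo metric}. Then κ(x,y) = sup{|f(x) - f(y)| : f ∈ C(X) with |∇f| ≤ 1}, where |∇f|(x)² = (1/m(x))Σ_y b(x,y)|f(x)-f(y)|². -/
open scoped BigOperators

variable {X : Type*}

/-- `κ(x,y) = sup{|f x - f y| : |∇f| ≤ 1}`. -/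
theorem stmt_11 (b : X → X → ℝ) (m : X → ℝ)
    (hb : IsGraph b) (hm : ∀ x, 0 < m x) :
    ∀ x y : X, kappa b m x y =
      sSup {t | ∃ f : X → ℝ,
        (∀ z, Summable (fun u => b z u * |f z - f u| ^ 2) ∧
          ∑' u, b z u * |f z - f u| ^ 2 ≤ m z) ∧ t = |f x - f y|} := by
  intro x y
  unfold kappa
  congr 1
  ext t
  constructor
  · rintro ⟨σ, hpm, hint, rfl⟩
    refine ⟨fun z => σ z y, fun z => ?_, ?_⟩
    · have hcomp : ∀ u, b z u * |σ z y - σ u y| ^ 2 ≤ b z u * σ z u ^ 2 := by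
        intro u
        refine mul_le_mul_of_nonneg_left ?_ (hb.nonneg z u)
        have h1 : |σ z y - σ u y| ≤ σ z u := by
          rw [abs_sub_le_iff]
          constructor
          · linarith [hpm.triangle z u y]
          · linarith [hpm.triangle u z y, hpm.symm z u]
        exact pow_le_pow_left₀ (abs_nonneg _) h1 2
      have hnn : ∀ u, 0 ≤ b z u * |σ z y - σ u y| ^ 2 := fun u =>
        mul_nonneg (hb.nonneg z u) (by positivity)
      have hsum : Summable (fun u => b z u * |σ z y - σ u y| ^ 2) :=
        Summable.of_nonneg_of_le hnn hcomp (hint z).1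
      refine ⟨hsum, le_trans (Summable.tsum_le_tsum hcomp hsum (hint z).1) (hint z).2⟩
    · simp only []
      rw [hpm.refl y, sub_zero, abs_of_nonneg (hpm.nonneg x y)]
  · rintro ⟨f, hf, rfl⟩
    refine ⟨fun z u => |f z - f u|, ?_, ?_, rfl⟩
    · exact ⟨fun z u => abs_nonneg _, fun z => by simp,
        fun z u => abs_sub_comm _ _, fun a c d => abs_sub_le _ _ _⟩
    · exact hf
end

section
/- Let b be a star graph over (X,m) with center p and |X| ≥ 2. Then for every x ∈ X \ {p}, the canonical pseudo metric κ = sup of all intrinsic pseudo metrics satisfies κ(x,p)² = min(m(x), m(p))/b(x,p). -/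
open scoped BigOperators

variable {X : Type*}

lemma star_neighbor (b : X → X → ℝ) (p : X) (hb : IsGraph b)
    (hstar : IsStarCenter b p) {x : X} (hx : x ≠ p) :
    0 < b x p ∧ ∀ y, y ≠ p → b x y = 0 := by
  obtain ⟨y, hy, huniq⟩ := hstar.2 x hx
  have hyp : y = p := by
    by_contra hyp
    obtain ⟨z, hz, huniq'⟩ := hstar.2 y hyp
    have hzx : x = z := huniq' x (show 0 < b y x by rw [hb.symm y x]; exact hy)
    obtain ⟨n, γ, hpath, h0, hn⟩ := hstar.1 x p
    have key : ∀ i ≤ n, γ i = x ∨ γ i = y := by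
      intro i hi
      induction i with
      | zero => left; exact h0
      | succ j ih =>
        have hjn : j < n := hi
        have hj := ih (le_of_lt hjn)
        have hpos := hpath j hjn
        rcases hj with h | h
        · right; rw [h] at hpos; exact huniq _ hpos
        · left; rw [h] at hpos; exact (huniq' _ hpos).trans hzx.symm
    rcases key n le_rfl with h | h
    · rw [hn] at h; exact hx h.symm
    · rw [hn] at h; exact hyp h.symm
  subst hyp
  refine ⟨hy, fun y' hy' => ?_⟩
  by_contra h
  have : 0 < b x y' := lt_of_le_of_ne (hb.nonneg x y') (Ne.symm h)
  exact hy' (huniq y' this)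

/-- on a star graph with center `p`,
`κ(x,p)² = min(m x, m p) / b(x,p)` for `x ≠ p`. -/
theorem stmt_12 (b : X → X → ℝ) (m : X → ℝ) (p : X)
    (hb : IsGraph b) (hm : ∀ x, 0 < m x)
    (hstar : IsStarCenter b p) (hcard : ∃ x : X, x ≠ p) :
    ∀ x, x ≠ p → (kappa b m x p) ^ 2 = min (m x) (m p) / b x p := by
  classical
  intro x hx
  obtain ⟨hbxp, hzero⟩ := star_neighbor b p hb hstar hx
  set q : ℝ := min (m x) (m p) / b x p with hq
  have hqpos : 0 < q := div_pos (lt_min (hm x) (hm p)) hbxp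
  set r : ℝ := Real.sqrt q with hr
  have hr2 : r ^ 2 = q := Real.sq_sqrt hqpos.le
  have hrnn : 0 ≤ r := Real.sqrt_nonneg _
  -- the extremal metric
  set f : X → ℝ := fun z => if z = x then r else 0 with hf
  set σ : X → X → ℝ := fun a c => |f a - f c| with hσ
  have hpm : IsPseudoMetric σ := by
    refine ⟨fun a c => abs_nonneg _, fun a => by simp [hσ],
      fun a c => abs_sub_comm _ _, fun a c d => abs_sub_le _ _ _⟩
  have hfp : f p = 0 := by simp [hf, Ne.symm hx]
  have hfx : f x = r := by simp [hf]
  have hσxp : σ x p = r := by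
    simp [hσ, hfp, hfx, abs_of_nonneg hrnn]
  have hintr : IsIntrinsic b m σ := by
    intro z
    by_cases hzx : z = x
    · subst hzx
      have hsupp : ∀ y, y ∉ ({p} : Finset X) → b z y * σ z y ^ 2 = 0 := by
        intro y hy
        simp only [Finset.mem_singleton] at hy
        rw [hzero y hy, zero_mul]
      have hsum : Summable (fun y => b z y * σ z y ^ 2) :=
        summable_of_ne_finset_zero hsupp
      refine ⟨hsum, ?_⟩
      rw [tsum_eq_sum hsupp, Finset.sum_singleton, hσxp, hr2, hq,
        mul_div_cancel₀ _ hbxp.ne']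
      exact min_le_left _ _
    · by_cases hzp : z = p
      · subst hzp
        have hσzy : ∀ y, y ≠ x → σ z y = 0 := by
          intro y hy
          simp [hσ, hf, hy, Ne.symm hx]
        have hsupp : ∀ y, y ∉ ({x} : Finset X) → b z y * σ z y ^ 2 = 0 := by
          intro y hy
          simp only [Finset.mem_singleton] at hy
          rw [hσzy y hy]; ring
        have hsum : Summable (fun y => b z y * σ z y ^ 2) :=
          summable_of_ne_finset_zero hsupp
        refine ⟨hsum, ?_⟩
        have hσpx : σ z x = r := by rw [hpm.symm]; exact hσxp
        rw [tsum_eq_sum hsupp, Finset.sum_singleton, hσpx, hr2, hq, ← hb.symm,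
          mul_div_cancel₀ _ hbxp.ne']
        exact min_le_right _ _
      · have hall : ∀ y, b z y * σ z y ^ 2 = 0 := by
          intro y
          by_cases hyx : y = x
          · have : b z y = 0 := by
              by_contra h
              have hpos : 0 < b z y := lt_of_le_of_ne (hb.nonneg z y) (Ne.symm h)
              obtain ⟨w, hw, huniq⟩ := hstar.2 z hzp
              have h1 : y = w := huniq y hpos
              have h2 : p = w := huniq p (star_neighbor b p hb hstar hzp).1
              exact hx ((hyx.symm.trans h1).trans h2.symm)
            rw [this, zero_mul]
          · have : σ z y = 0 := by simp [hσ, hf, hzx, hyx]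
            rw [this]; ring
        have heq : (fun y => b z y * σ z y ^ 2) = fun _ => 0 := funext hall
        rw [heq]
        exact ⟨summable_zero, by simpa using (hm z).le⟩
  -- kappa = r
  set S := {t | ∃ τ, IsPseudoMetric τ ∧ IsIntrinsic b m τ ∧ t = τ x p} with hS
  have hrmem : r ∈ S := ⟨σ, hpm, hintr, hσxp.symm⟩
  have hub : ∀ t ∈ S, t ≤ r := by
    rintro t ⟨τ, hτpm, hτint, rfl⟩
    have ht1 : b x p * τ x p ^ 2 ≤ m x := by
      refine le_trans (Summable.le_tsum (hτint x).1 p ?_) (hτint x).2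
      intro j _
      exact mul_nonneg (hb.nonneg x j) (sq_nonneg _)
    have ht2 : b p x * τ p x ^ 2 ≤ m p := by
      refine le_trans (Summable.le_tsum (hτint p).1 x ?_) (hτint p).2
      intro j _
      exact mul_nonneg (hb.nonneg p j) (sq_nonneg _)
    rw [← hb.symm, ← hτpm.symm] at ht2
    have hsq : τ x p ^ 2 ≤ q := by
      rw [hq, le_div_iff₀ hbxp, le_min_iff]
      constructor <;> linarith [ht1, ht2]
    calc τ x p = Real.sqrt (τ x p ^ 2) := (Real.sqrt_sq (hτpm.nonneg x p)).symm
      _ ≤ Real.sqrt q := Real.sqrt_le_sqrt hsq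
      _ = r := rfl
  have hkap : kappa b m x p = r := by
    unfold kappa
    exact le_antisymm (csSup_le ⟨r, hrmem⟩ hub) (le_csSup ⟨r, hub⟩ hrmem)
  rw [hkap, hr2]
end

section
/- Let b be a star graph over (X,m). The canonical pseudo metric κ (the pointwise supremum of all intrinsic pseudo metrics) is itself an intrinsic pseudo metric if and only if there exists a center p of b such that Σ_{x ∈ X\{p}} m(x) ≤ m(p). -/
open scoped BigOperators

variable {X : Type*}

section StarAux
variable {X : Type*}

lemma star_struct (b : X → X → ℝ) (p : X) (hb : IsGraph b) (hp : IsStarCenter b p) :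
    ∀ x, x ≠ p → 0 < b x p ∧ ∀ y, y ≠ p → b x y = 0 := by
  intro x hx
  obtain ⟨y0, hy0, huniq⟩ := hp.2 x hx
  by_cases hyp : y0 = p
  · subst hyp
    refine ⟨hy0, fun y hy => ?_⟩
    by_contra h
    have h' : 0 < b x y := lt_of_le_of_ne (hb.nonneg x y) (Ne.symm h)
    exact hy (huniq y h')
  · exfalso
    obtain ⟨y1, hy1, huniq1⟩ := hp.2 y0 hyp
    have hxy0 : 0 < b y0 x := by rw [hb.symm]; exact hy0
    have hy1x : y1 = x := (huniq1 x hxy0).symm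
    obtain ⟨n, γ, hpath, h0, hn⟩ := hp.1 p x
    have key : ∀ k, k ≤ n → γ (n - k) = x ∨ γ (n - k) = y0 := by
      intro k
      induction k with
      | zero => intro _; left; simpa using hn
      | succ k ih =>
        intro hk
        have hk' := ih (Nat.le_of_succ_le hk)
        have hlt : n - (k+1) < n := by omega
        have hsucc : n - (k+1) + 1 = n - k := by omega
        have hedge := hpath (n - (k+1)) hlt
        rw [hsucc] at hedge
        rcases hk' with h | h
        · rw [h] at hedge
          have h2 : 0 < b x (γ (n - (k+1))) := by rw [hb.symm]; exact hedge
          right; exact huniq _ h2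
        · rw [h] at hedge
          have h2 : 0 < b y0 (γ (n - (k+1))) := by rw [hb.symm]; exact hedge
          left; rw [← hy1x]; exact huniq1 _ h2
    have hfin := key n le_rfl
    rw [Nat.sub_self, h0] at hfin
    rcases hfin with h | h
    · exact hx h.symm
    · exact hyp h.symm

lemma zero_pm : IsPseudoMetric (fun (_ _ : X) => 0) :=
  ⟨fun _ _ => le_rfl, fun _ => rfl, fun _ _ => rfl, fun _ _ _ => by simp⟩

lemma zero_intrinsic (b : X → X → ℝ) (m : X → ℝ) (hm : ∀ x, 0 < m x) :
    IsIntrinsic b m (fun _ _ => 0) := by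
  intro x
  constructor
  · simpa using summable_zero
  · simpa using (hm x).le

lemma zero_mem (b : X → X → ℝ) (m : X → ℝ) (hm : ∀ x, 0 < m x) (x y : X) :
    (0:ℝ) ∈ {t | ∃ σ, IsPseudoMetric σ ∧ IsIntrinsic b m σ ∧ t = σ x y} :=
  ⟨fun _ _ => 0, zero_pm, zero_intrinsic b m hm, rfl⟩

lemma kappa_symm (b : X → X → ℝ) (m : X → ℝ) (x y : X) : kappa b m x y = kappa b m y x := by
  unfold kappa
  congr 1
  ext t
  constructor <;> rintro ⟨σ, h1, h2, rfl⟩ <;> exact ⟨σ, h1, h2, h1.symm _ _⟩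

lemma edge_bound (b : X → X → ℝ) (m : X → ℝ) (hb : IsGraph b) {σ : X → X → ℝ}
    (hσ : IsPseudoMetric σ) (hσi : IsIntrinsic b m σ) (x p : X) :
    b x p * σ x p ^ 2 ≤ min (m x) (m p) := by
  have h1 := hσi x
  have h2 := hσi p
  refine le_min ?_ ?_
  · exact le_trans (Summable.le_tsum h1.1 p (fun y _ => mul_nonneg (hb.nonneg x y) (sq_nonneg _))) h1.2
  · have := le_trans (Summable.le_tsum h2.1 x (fun y _ => mul_nonneg (hb.nonneg p y) (sq_nonneg _))) h2.2
    rwa [hb.symm p x, hσ.symm p x] at this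

lemma mem_le (b : X → X → ℝ) (m : X → ℝ) (hb : IsGraph b) (x p : X) (hbp : 0 < b x p)
    {t : ℝ} (ht : t ∈ {t | ∃ σ, IsPseudoMetric σ ∧ IsIntrinsic b m σ ∧ t = σ x p}) :
    t ≤ Real.sqrt (min (m x) (m p) / b x p) := by
  obtain ⟨σ, h1, h2, rfl⟩ := ht
  have hbd := edge_bound b m hb h1 h2 x p
  have hsq : σ x p ^ 2 ≤ min (m x) (m p) / b x p := by
    rw [le_div_iff₀ hbp]; linarith [hbd]
  calc σ x p = Real.sqrt (σ x p ^ 2) := (Real.sqrt_sq (h1.nonneg x p)).symm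
    _ ≤ _ := Real.sqrt_le_sqrt hsq

lemma kappa_bdd (b : X → X → ℝ) (m : X → ℝ) (hb : IsGraph b) (x p : X) (hbp : 0 < b x p) :
    BddAbove {t | ∃ σ, IsPseudoMetric σ ∧ IsIntrinsic b m σ ∧ t = σ x p} :=
  ⟨_, fun _ ht => mem_le b m hb x p hbp ht⟩

lemma kappa_nonneg (b : X → X → ℝ) (m : X → ℝ) (hb : IsGraph b) (hm : ∀ x, 0 < m x)
    (x p : X) (hbp : 0 < b x p) : 0 ≤ kappa b m x p :=
  le_csSup (kappa_bdd b m hb x p hbp) (zero_mem b m hm x p)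

lemma kappa_le (b : X → X → ℝ) (m : X → ℝ) (hb : IsGraph b) (hm : ∀ x, 0 < m x)
    (x p : X) (hbp : 0 < b x p) :
    kappa b m x p ≤ Real.sqrt (min (m x) (m p) / b x p) :=
  csSup_le ⟨0, zero_mem b m hm x p⟩ (fun _ ht => mem_le b m hb x p hbp ht)

lemma kappa_sq_le (b : X → X → ℝ) (m : X → ℝ) (hb : IsGraph b) (hm : ∀ x, 0 < m x)
    (x p : X) (hbp : 0 < b x p) :
    b x p * kappa b m x p ^ 2 ≤ min (m x) (m p) := by
  have h0 := kappa_nonneg b m hb hm x p hbp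
  have h1 := kappa_le b m hb hm x p hbp
  have hdiv : (0:ℝ) ≤ min (m x) (m p) / b x p :=
    div_nonneg (le_min (hm x).le (hm p).le) hbp.le
  have hsq : kappa b m x p ^ 2 ≤ min (m x) (m p) / b x p := by
    calc kappa b m x p ^ 2 ≤ Real.sqrt (min (m x) (m p) / b x p) ^ 2 :=
        pow_le_pow_left₀ h0 h1 2
      _ = _ := Real.sq_sqrt hdiv
  calc b x p * kappa b m x p ^ 2 ≤ b x p * (min (m x) (m p) / b x p) :=
        mul_le_mul_of_nonneg_left hsq hbp.le
    _ = min (m x) (m p) := by field_simp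

open Classical in
noncomputable def starSigma (c : ℝ) (z : X) : X → X → ℝ :=
  fun a b => if a = b then 0 else (if a = z then c else 0) + (if b = z then c else 0)

lemma starSigma_zp {z p : X} (c : ℝ) (hz : z ≠ p) : starSigma c z z p = c := by
  unfold starSigma; rw [if_neg hz, if_pos rfl, if_neg (Ne.symm hz), add_zero]

lemma starSigma_pm {c : ℝ} (hc : 0 ≤ c) (z : X) : IsPseudoMetric (starSigma c z) := by
  classical
  have hnn : ∀ x y : X, 0 ≤ starSigma c z x y := by
    intro x y; unfold starSigma
    split
    · exact le_rfl
    · positivity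
  refine ⟨hnn, ?_, ?_, ?_⟩
  · intro x; simp [starSigma]
  · intro x y; unfold starSigma
    by_cases h : x = y
    · simp [h]
    · rw [if_neg h, if_neg (Ne.symm h), add_comm]
  · intro x y w
    unfold starSigma
    by_cases hxw : x = w
    · rw [if_pos hxw]
      have h1 := hnn x y; have h2 := hnn y w
      unfold starSigma at h1 h2
      positivity
    · rw [if_neg hxw]
      by_cases hxy : x = y
      · subst hxy; rw [if_pos rfl, if_neg hxw, zero_add]
      · by_cases hyw : y = w
        · subst hyw; rw [if_neg hxy, if_pos rfl, add_zero]
        · rw [if_neg hxy, if_neg hyw]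
          have : (0:ℝ) ≤ if y = z then c else 0 := by split <;> simp [hc]
          linarith

lemma starSigma_intrinsic (b : X → X → ℝ) (m : X → ℝ) (hb : IsGraph b) (hm : ∀ x, 0 < m x)
    (p z : X) (hz : z ≠ p)
    (hst : ∀ x, x ≠ p → 0 < b x p ∧ ∀ y, y ≠ p → b x y = 0) :
    IsIntrinsic b m (starSigma (Real.sqrt (min (m z) (m p) / b z p)) z) := by
  classical
  set c := Real.sqrt (min (m z) (m p) / b z p) with hc
  have hbzp := (hst z hz).1
  have hc2 : b z p * c ^ 2 = min (m z) (m p) := by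
    rw [hc, Real.sq_sqrt (div_nonneg (le_min (hm z).le (hm p).le) hbzp.le)]
    field_simp
  have hmin_z : min (m z) (m p) ≤ m z := min_le_left _ _
  have hmin_p : min (m z) (m p) ≤ m p := min_le_right _ _
  intro x
  set σ := starSigma c z with hσ
  have hsupp : ∀ y, y ∉ ({p, z} : Finset X) → b x y * σ x y ^ 2 = 0 := by
    intro y hy
    simp only [Finset.mem_insert, Finset.mem_singleton, not_or] at hy
    obtain ⟨hyp, hyz⟩ := hy
    by_cases hxp : x = p
    · rw [hxp]
      have : σ p y = 0 := by
        unfold σ; unfold starSigma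
        by_cases h : p = y
        · rw [if_pos h]
        · rw [if_neg h, if_neg (Ne.symm hz), if_neg hyz, add_zero]
      rw [this]; ring
    · have : b x y = 0 := by rw [hb.symm]; exact (hst y hyp).2 x hxp
      rw [this]; ring
  have hsum : Summable (fun y => b x y * σ x y ^ 2) := summable_of_ne_finset_zero hsupp
  refine ⟨hsum, ?_⟩
  rw [tsum_eq_sum hsupp]
  have hpz : p ≠ z := Ne.symm hz
  rw [Finset.sum_pair hpz]
  by_cases hxp : x = p
  · rw [hxp]
    have h1 : b p p * σ p p ^ 2 = 0 := by rw [hb.loopless]; ring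
    have h2 : σ p z = c := by
      unfold σ; unfold starSigma
      rw [if_neg hpz, if_neg (Ne.symm hz), if_pos rfl, zero_add]
    rw [h1, h2, zero_add, hb.symm p z, hc2]
    exact hmin_p
  · by_cases hxz : x = z
    · rw [hxz]
      have h1 : σ z p = c := starSigma_zp c hz
      have h2 : b z z * σ z z ^ 2 = 0 := by rw [hb.loopless]; ring
      rw [h1, h2, add_zero, hc2]
      exact hmin_z
    · have h1 : σ x p = 0 := by
        unfold σ; unfold starSigma
        rw [if_neg hxp, if_neg hxz, if_neg (Ne.symm hz), add_zero]
      have h2 : b x z = 0 := by rw [hb.symm]; exact (hst z hz).2 x hxp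
      rw [h1, h2]
      simpa using (hm x).le

lemma kappa_ge (b : X → X → ℝ) (m : X → ℝ) (hb : IsGraph b) (hm : ∀ x, 0 < m x)
    (p z : X) (hz : z ≠ p)
    (hst : ∀ x, x ≠ p → 0 < b x p ∧ ∀ y, y ≠ p → b x y = 0) :
    min (m z) (m p) ≤ b z p * kappa b m z p ^ 2 := by
  classical
  have hbzp := (hst z hz).1
  set c := Real.sqrt (min (m z) (m p) / b z p) with hc
  have hc0 : 0 ≤ c := Real.sqrt_nonneg _
  have hmem : c ∈ {t | ∃ σ, IsPseudoMetric σ ∧ IsIntrinsic b m σ ∧ t = σ z p} :=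
    ⟨starSigma c z, starSigma_pm hc0 z, starSigma_intrinsic b m hb hm p z hz hst,
      (starSigma_zp c hz).symm⟩
  have hcle : c ≤ kappa b m z p := le_csSup (kappa_bdd b m hb z p hbzp) hmem
  have hcsq : c ^ 2 ≤ kappa b m z p ^ 2 := pow_le_pow_left₀ hc0 hcle 2
  have hcv : b z p * c ^ 2 = min (m z) (m p) := by
    rw [hc, Real.sq_sqrt (div_nonneg (le_min (hm z).le (hm p).le) hbzp.le)]
    field_simp
  calc min (m z) (m p) = b z p * c ^ 2 := hcv.symm
    _ ≤ b z p * kappa b m z p ^ 2 := mul_le_mul_of_nonneg_left hcsq hbzp.le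

end StarAux

/-- on a star graph, `κ` is intrinsic iff some center `p`
satisfies `∑_{x ≠ p} m x ≤ m p`. -/
theorem stmt_13 (b : X → X → ℝ) (m : X → ℝ)
    (hb : IsGraph b) (hm : ∀ x, 0 < m x) (hstar : ∃ p, IsStarCenter b p) :
    IsIntrinsic b m (kappa b m) ↔
      ∃ p, IsStarCenter b p ∧
        ∑' x : {x : X // x ≠ p}, ENNReal.ofReal (m x) ≤ ENNReal.ofReal (m p) := by
  classical
  obtain ⟨p0, hp0⟩ := hstar
  have hst0 := star_struct b p0 hb hp0
  constructor
  · intro hκ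
    by_cases hA : ∀ x, x ≠ p0 → m x ≤ m p0
    · refine ⟨p0, hp0, ?_⟩
      set f := fun y => b p0 y * kappa b m p0 y ^ 2 with hf
      have hfs := (hκ p0).1
      have hfle := (hκ p0).2
      set g := fun y => if y = p0 then 0 else m y with hg
      have hgnn : ∀ y, 0 ≤ g y := by
        intro y; simp only [hg]
        split
        · exact le_rfl
        · exact (hm y).le
      have hgf : ∀ y, g y ≤ f y := by
        intro y
        by_cases hy : y = p0
        · simp only [hg, hf, if_pos hy]
          exact mul_nonneg (hb.nonneg _ _) (sq_nonneg _)
        · have h1 := kappa_ge b m hb hm p0 y hy hst0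
          have h2 : min (m y) (m p0) = m y := min_eq_left (hA y hy)
          have h3 : f y = b y p0 * kappa b m y p0 ^ 2 := by
            simp only [hf]; rw [hb.symm, kappa_symm]
          simp only [hg, if_neg hy]
          rw [h3, ← h2]; exact h1
      have hgs : Summable g := Summable.of_nonneg_of_le hgnn hgf hfs
      have hgle : ∑' y, g y ≤ m p0 := le_trans (Summable.tsum_le_tsum hgf hgs hfs) hfle
      calc ∑' x : {x : X // x ≠ p0}, ENNReal.ofReal (m x)
          = ∑' y, ENNReal.ofReal (g y) := by
            refine Eq.trans (tsum_subtype {x | x ≠ p0} (fun y => ENNReal.ofReal (m y))) ?_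
            refine tsum_congr fun y => ?_
            by_cases hy : y = p0 <;> simp [Set.indicator_apply, hy, hg]
        _ = ENNReal.ofReal (∑' y, g y) := (ENNReal.ofReal_tsum_of_nonneg hgnn hgs).symm
        _ ≤ ENNReal.ofReal (m p0) := ENNReal.ofReal_le_ofReal hgle
    · push_neg at hA
      obtain ⟨x, hx, hmx⟩ := hA
      have honly : ∀ z, z = p0 ∨ z = x := by
        intro z
        by_contra h
        push_neg at h
        obtain ⟨hz1, hz2⟩ := h
        have hfs := (hκ p0).1
        have hfle := (hκ p0).2
        have hxz : x ≠ z := fun h' => hz2 h'.symm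
        have hsum2 : b p0 x * kappa b m p0 x ^ 2 + b p0 z * kappa b m p0 z ^ 2 ≤ m p0 := by
          have h := Summable.sum_le_tsum ({x, z} : Finset X)
            (fun i _ => mul_nonneg (hb.nonneg _ _) (sq_nonneg _)) hfs
          rw [Finset.sum_pair hxz] at h
          exact h.trans hfle
        have hbx := kappa_ge b m hb hm p0 x hx hst0
        have hbz := kappa_ge b m hb hm p0 z hz1 hst0
        have e1 : b p0 x * kappa b m p0 x ^ 2 = b x p0 * kappa b m x p0 ^ 2 := by
          rw [hb.symm, kappa_symm]
        have e2 : b p0 z * kappa b m p0 z ^ 2 = b z p0 * kappa b m z p0 ^ 2 := by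
          rw [hb.symm, kappa_symm]
        have hx' : min (m x) (m p0) = m p0 := min_eq_right hmx.le
        have hz' : 0 < min (m z) (m p0) := lt_min (hm z) (hm p0)
        rw [e1, e2] at hsum2
        rw [hx'] at hbx
        linarith
      have hxp : x ≠ p0 := hx
      refine ⟨x, ⟨hp0.1, ?_⟩, ?_⟩
      · intro w hw
        have hwp : w = p0 := (honly w).resolve_right hw
        rw [hwp]
        refine ⟨x, ?_, ?_⟩
        · show 0 < b p0 x
          rw [hb.symm]; exact (hst0 x hx).1
        · intro y hy
          rcases honly y with h | h
          · rw [h, hb.loopless] at hy; exact absurd hy (lt_irrefl 0)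
          · exact h
      · rw [tsum_eq_single (⟨p0, Ne.symm hxp⟩ : {z : X // z ≠ x}) ?_]
        · exact ENNReal.ofReal_le_ofReal hmx.le
        · intro b' hb'
          exact absurd (Subtype.ext ((honly b'.1).resolve_right b'.2)) hb'
  · rintro ⟨p, hp, hsum⟩
    have hst := star_struct b p hb hp
    intro x
    by_cases hxp : x = p
    · subst hxp
      set f := fun y => b x y * kappa b m x y ^ 2 with hf
      have hfnn : ∀ y, 0 ≤ f y := fun y => mul_nonneg (hb.nonneg _ _) (sq_nonneg _)
      have hbound : ∀ y, ENNReal.ofReal (f y) ≤ (if y = x then 0 else ENNReal.ofReal (m y)) := by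
        intro y
        by_cases hy : y = x
        · simp [hf, hy, hb.loopless]
        · rw [if_neg hy]
          apply ENNReal.ofReal_le_ofReal
          have h1 := kappa_sq_le b m hb hm y x (hst y hy).1
          have e : f y = b y x * kappa b m y x ^ 2 := by
            simp only [hf]; rw [hb.symm, kappa_symm]
          rw [e]
          exact h1.trans (min_le_left _ _)
      have hENN : ∑' y, ENNReal.ofReal (f y) ≤ ENNReal.ofReal (m x) := by
        calc ∑' y, ENNReal.ofReal (f y)
            ≤ ∑' y, (if y = x then 0 else ENNReal.ofReal (m y)) :=
              ENNReal.tsum_le_tsum hbound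
          _ = ∑' z : {z : X // z ≠ x}, ENNReal.ofReal (m z) := by
              refine Eq.trans ?_ (tsum_subtype {z | z ≠ x} (fun y => ENNReal.ofReal (m y))).symm
              refine tsum_congr fun y => ?_
              by_cases hy : y = x <;> simp [Set.indicator_apply, hy]
          _ ≤ ENNReal.ofReal (m x) := hsum
      have hne : ∑' y, ENNReal.ofReal (f y) ≠ ⊤ := ne_top_of_le_ne_top ENNReal.ofReal_ne_top hENN
      have hsumm : Summable f := by
        have h := ENNReal.summable_toReal hne
        exact h.congr fun y => ENNReal.toReal_ofReal (hfnn y)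
      refine ⟨hsumm, ?_⟩
      rw [← ENNReal.ofReal_le_ofReal_iff (hm x).le,
        ENNReal.ofReal_tsum_of_nonneg hfnn hsumm]
      exact hENN
    · have hsupp : ∀ y, y ∉ ({p} : Finset X) → b x y * kappa b m x y ^ 2 = 0 := by
        intro y hy
        simp only [Finset.mem_singleton] at hy
        rw [(hst x hxp).2 y hy]; ring
      refine ⟨summable_of_ne_finset_zero hsupp, ?_⟩
      rw [tsum_eq_sum hsupp, Finset.sum_singleton]
      exact (kappa_sq_le b m hb hm x p (hst x hxp).1).trans (min_le_left _ _)
end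

section
/- Let b be a locally finite, connected, weakly spherically symmetric graph over (X,m) with root o. If Σ_{r=1}^∞ √(min(m(S_r), m(S_{r+1})))/√(|∂B_r|) = ∞, where S_r is the combinatorial r-sphere around o and |∂B_r| = Σ_{x∈S_r, y∈S_{r+1}} b(x,y), then there exists a sequence (χ_n) in C_c(X) of radially symmetric functions with χ_n → 1 pointwise and |∇χ_n|² ≤ 2, where |∇f|²(x) = (1/m(x))Σ_y b(x,y)(f(x)-f(y))². -/
open scoped BigOperators

variable {X : Type*}

/-- The combinatorial distance from `o` to `x` in the graph `b`. -/
noncomputable def combDist (b : X → X → ℝ) (o x : X) : ℕ :=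
  sInf {n | ∃ γ : ℕ → X, IsPath b γ n ∧ γ 0 = o ∧ γ n = x}

/-- A function is radially symmetric (w.r.t. the root `o`) if its value only
depends on the combinatorial distance to `o`. -/
def RadSymm (b : X → X → ℝ) (o : X) (f : X → ℝ) : Prop :=
  ∀ x y, combDist b o x = combDist b o y → f x = f y

/-- The measure of the combinatorial `r`-sphere around `o`. -/
noncomputable def sphMass (b : X → X → ℝ) (m : X → ℝ) (o : X) (r : ℕ) : ℝ :=
  ∑' x : {x : X // combDist b o x = r}, m x

/-- The weighted size `|∂B_r|` of the boundary of the combinatorial `r`-ball. -/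
noncomputable def bdry (b : X → X → ℝ) (o : X) (r : ℕ) : ℝ :=
  ∑' p : {x : X // combDist b o x = r} × {y : X // combDist b o y = r + 1},
    b p.1 p.2

/-- The graph `b` over `(X,m)` is weakly spherically symmetric with root `o`:
the functions `κ₊` and `κ₋` are radially symmetric. -/
def WSS (b : X → X → ℝ) (m : X → ℝ) (o : X) : Prop :=
  ∀ x y, combDist b o x = combDist b o y →
    ((1 / m x) * ∑' z : {z : X // combDist b o z = combDist b o x + 1}, b x z =
      (1 / m y) * ∑' z : {z : X // combDist b o z = combDist b o y + 1}, b y z) ∧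
    ((1 / m x) * ∑' z : {z : X // combDist b o z = combDist b o x - 1}, b x z =
      (1 / m y) * ∑' z : {z : X // combDist b o z = combDist b o y - 1}, b y z)

/-! For a radial function `F ∘ d` the gradient at a vertex of the sphere `S_k` is
`κ₊ (F k - F (k+1))² + κ₋ (F k - F (k-1))²`, and weak spherical symmetry makes
`κ₊ = |∂B_k| / m(S_k)` on `S_k` and `κ₋ = |∂B_k| / m(S_{k+1})` on `S_{k+1}`. So both terms
are at most `1` as soon as `F` drops by at most `w_k = √(min (m(S_k), m(S_{k+1}))) / √|∂B_k|`
between `S_k` and `S_{k+1}`. The cut-off `χ_n` is `1` up to radius `n` and then decreases by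
`w_k` per step until it reaches `0`, which it does because `∑ w_k = ∞`; spheres are finite,
so `χ_n` is finitely supported. -/

open Filter

section CombDist

variable {b : X → X → ℝ} {o : X}

theorem combDist_le_of_isPath {γ : ℕ → X} {n : ℕ} (hγ : IsPath b γ n) (h0 : γ 0 = o) :
    combDist b o (γ n) ≤ n :=
  Nat.sInf_le ⟨γ, hγ, h0, rfl⟩

theorem exists_isPath_combDist (hconn : GraphConnected b) (x : X) :
    ∃ γ : ℕ → X, IsPath b γ (combDist b o x) ∧ γ 0 = o ∧ γ (combDist b o x) = x :=
  Nat.sInf_mem (hconn o x)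

theorem eq_of_combDist_eq_zero (hconn : GraphConnected b) {x : X} (h : combDist b o x = 0) :
    x = o := by
  obtain ⟨γ, -, h0, hx⟩ := exists_isPath_combDist (o := o) hconn x
  rw [← hx, h, h0]

theorem combDist_le_succ_of_adj (hconn : GraphConnected b) {x y : X} (hxy : 0 < b x y) :
    combDist b o y ≤ combDist b o x + 1 := by
  obtain ⟨γ, hγ, h0, hx⟩ := exists_isPath_combDist (o := o) hconn x
  set n := combDist b o x
  have hpath : IsPath b (fun i => if i ≤ n then γ i else y) (n + 1) := by
    intro i hi
    rcases Nat.lt_or_ge i n with hin | hin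
    · simpa [hin.le, Nat.succ_le_of_lt hin] using hγ i hin
    · obtain rfl : i = n := by omega
      simpa [hx] using hxy
  simpa [h0] using combDist_le_of_isPath hpath (by simp [h0])

theorem exists_adj_of_combDist_eq_succ (hconn : GraphConnected b) {x : X} {k : ℕ}
    (hx : combDist b o x = k + 1) : ∃ y, combDist b o y = k ∧ 0 < b y x := by
  obtain ⟨γ, hγ, h0, hγx⟩ := exists_isPath_combDist (o := o) hconn x
  rw [hx] at hγ hγx
  have hadj : 0 < b (γ k) x := hγx ▸ hγ k k.lt_succ_self
  have hle : combDist b o (γ k) ≤ k :=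
    combDist_le_of_isPath (fun i hi => hγ i (by omega)) h0
  have hge := combDist_le_succ_of_adj (o := o) hconn hadj
  exact ⟨γ k, by omega, hadj⟩

theorem finite_combDist_eq (hconn : GraphConnected b) (hlf : LocFin b) (r : ℕ) :
    {x | combDist b o x = r}.Finite := by
  induction r with
  | zero => exact (Set.finite_singleton o).subset fun x hx => eq_of_combDist_eq_zero hconn hx
  | succ k ih =>
    refine (ih.biUnion fun y _ => hlf y).subset fun x hx => ?_
    obtain ⟨y, hy, hyx⟩ := exists_adj_of_combDist_eq_succ hconn hx
    exact Set.mem_biUnion hy hyx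

theorem finite_sphere (hconn : GraphConnected b) (hlf : LocFin b) (r : ℕ) :
    Finite {x // combDist b o x = r} :=
  (finite_combDist_eq hconn hlf r).to_subtype

theorem finite_support_comp_combDist (hconn : GraphConnected b) (hlf : LocFin b) {F : ℕ → ℝ}
    (hF : ∀ᶠ k in atTop, F k = 0) : (Function.support fun x => F (combDist b o x)).Finite := by
  obtain ⟨K, hK⟩ := eventually_atTop.mp hF
  refine ((Set.finite_lt_nat K).biUnion fun k _ => finite_combDist_eq hconn hlf k).subset
    fun x hx => Set.mem_biUnion (not_le.mp fun h => hx (hK _ h)) rfl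

end CombDist

section Radial

variable {b : X → X → ℝ} {o : X}

theorem tsum_radial_sq_sub_eq (hb : IsGraph b) (hconn : GraphConnected b) (hlf : LocFin b)
    (F : ℕ → ℝ) (x : X) :
    ∑' y, b x y * (F (combDist b o x) - F (combDist b o y)) ^ 2 =
      (∑' z : {z // combDist b o z = combDist b o x + 1}, b x z) *
          (F (combDist b o x) - F (combDist b o x + 1)) ^ 2 +
        (∑' z : {z // combDist b o z = combDist b o x - 1}, b x z) *
          (F (combDist b o x) - F (combDist b o x - 1)) ^ 2 := by
  generalize hk : combDist b o x = k
  set t : X → ℝ := fun y => b x y * (F k - F (combDist b o y)) ^ 2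
  set up : Set X := {z | combDist b o z = k + 1}
  set down : Set X := {z | combDist b o z = k - 1}
  -- a neighbour of `x` lies in `down`, in `up`, or in the sphere of `x`, where `t` vanishes;
  -- for `k = 0` truncated subtraction makes `down` that sphere, which is harmless
  have hsplit : t = up.indicator t + down.indicator t := by
    funext y
    by_cases hxy : 0 < b x y
    · have h₁ := combDist_le_succ_of_adj (o := o) hconn hxy
      have h₂ := combDist_le_succ_of_adj (o := o) hconn ((hb.symm x y) ▸ hxy)
      by_cases hyk : combDist b o y = k
      · simp [t, up, down, Set.indicator_apply, hyk]
      · simp only [Pi.add_apply, Set.indicator_apply, up, down, Set.mem_ofPred_eq]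
        split_ifs <;> first | omega | simp
    · have h0 : b x y = 0 := le_antisymm (not_lt.mp hxy) (hb.nonneg x y)
      simp [t, Set.indicator_apply, h0]
  have hsum : ∀ (S : Set X), S.Finite → Summable (S.indicator t) := fun S hS =>
    summable_of_hasFiniteSupport (hS.subset Set.support_indicator_subset)
  have hsphere : ∀ j, ∑' y, {z | combDist b o z = j}.indicator t y =
      (∑' z : {z // combDist b o z = j}, b x z) * (F k - F j) ^ 2 := by
    intro j
    rw [← tsum_subtype, ← tsum_mul_right]
    exact tsum_congr fun z => by simp only [t, show combDist b o z = j from z.2]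
  rw [hsplit, Pi.add_def, (hsum _ (finite_combDist_eq hconn hlf _)).tsum_add
    (hsum _ (finite_combDist_eq hconn hlf _)), hsphere, hsphere]

end Radial

section WeaklySphericallySymmetric

variable {b : X → X → ℝ} {m : X → ℝ} {o : X}

-- The paper's `κ₊` and `κ₋`; `WSS b m o` unfolds to their radial symmetry.
variable (b m o) in
noncomputable def kappaPlus (x : X) : ℝ :=
  (1 / m x) * ∑' z : {z : X // combDist b o z = combDist b o x + 1}, b x z

variable (b m o) in
noncomputable def kappaMinus (x : X) : ℝ :=
  (1 / m x) * ∑' z : {z : X // combDist b o z = combDist b o x - 1}, b x z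

theorem tsum_sphere_mul_eq_mul_sphMass {c : X → ℝ} {a : ℝ} {k : ℕ}
    (hc : ∀ y, combDist b o y = k → c y = a) :
    ∑' y : {y // combDist b o y = k}, m y * c y = a * sphMass b m o k := by
  rw [sphMass, ← tsum_mul_left]
  exact tsum_congr fun y => by rw [hc y y.2, mul_comm]

theorem bdry_eq_tsum_tsum (hconn : GraphConnected b) (hlf : LocFin b) (k : ℕ) :
    bdry b o k =
      ∑' x : {x // combDist b o x = k}, ∑' z : {z // combDist b o z = k + 1}, b x z := by
  have := finite_sphere (o := o) hconn hlf k
  have := finite_sphere (o := o) hconn hlf (k + 1)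
  exact Summable.of_finite.tsum_prod' fun _ => Summable.of_finite

theorem bdry_eq_tsum_tsum_pred (hb : IsGraph b) (hconn : GraphConnected b) (hlf : LocFin b)
    (k : ℕ) :
    bdry b o k =
      ∑' z : {z // combDist b o z = k + 1}, ∑' x : {x // combDist b o x = k}, b z x := by
  have := finite_sphere (o := o) hconn hlf k
  have := finite_sphere (o := o) hconn hlf (k + 1)
  rw [bdry_eq_tsum_tsum hconn hlf,
    ← Summable.of_finite.tsum_comm' (fun _ => .of_finite) fun _ => .of_finite]
  exact tsum_congr fun z => tsum_congr fun x => hb.symm _ _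

theorem kappaPlus_mul_sphMass (hm : ∀ x, 0 < m x) (hwss : WSS b m o)
    (hconn : GraphConnected b) (hlf : LocFin b) {x : X} {k : ℕ} (hx : combDist b o x = k) :
    kappaPlus b m o x * sphMass b m o k = bdry b o k := by
  rw [bdry_eq_tsum_tsum hconn hlf, ← tsum_sphere_mul_eq_mul_sphMass (m := m)
    (c := kappaPlus b m o) (a := kappaPlus b m o x) fun y hy => (hwss y x (hy.trans hx.symm)).1]
  refine tsum_congr fun y => ?_
  rw [kappaPlus, ← mul_assoc, mul_one_div_cancel (hm y).ne', one_mul, y.2]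

theorem kappaMinus_mul_sphMass (hb : IsGraph b) (hm : ∀ x, 0 < m x) (hwss : WSS b m o)
    (hconn : GraphConnected b) (hlf : LocFin b) {x : X} {k : ℕ}
    (hx : combDist b o x = k + 1) :
    kappaMinus b m o x * sphMass b m o (k + 1) = bdry b o k := by
  rw [bdry_eq_tsum_tsum_pred hb hconn hlf, ← tsum_sphere_mul_eq_mul_sphMass (m := m)
    (c := kappaMinus b m o) (a := kappaMinus b m o x) fun y hy => (hwss y x (hy.trans hx.symm)).2]
  refine tsum_congr fun y => ?_
  rw [kappaMinus, ← mul_assoc, mul_one_div_cancel (hm y).ne', one_mul, y.2]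
  rfl

end WeaklySphericallySymmetric

section Gradient

variable {b : X → X → ℝ} {m : X → ℝ} {o : X}

theorem radial_gradient_le_two (hb : IsGraph b) (hm : ∀ x, 0 < m x) (hwss : WSS b m o)
    (hconn : GraphConnected b) (hlf : LocFin b) {F : ℕ → ℝ}
    (hF : ∀ k, (F k - F (k + 1)) ^ 2 * bdry b o k ≤
      min (sphMass b m o k) (sphMass b m o (k + 1)))
    (x : X) :
    (1 / m x) * ∑' y, b x y * (F (combDist b o x) - F (combDist b o y)) ^ 2 ≤ 2 := by
  rw [tsum_radial_sq_sub_eq hb hconn hlf, mul_add, ← mul_assoc, ← mul_assoc]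
  change kappaPlus b m o x * _ + kappaMinus b m o x * _ ≤ 2
  generalize hk : combDist b o x = k
  have := finite_sphere (o := o) hconn hlf k
  have hpos : 0 < sphMass b m o k :=
    Summable.of_finite.tsum_pos (fun y => (hm y).le) ⟨x, hk⟩ (hm x)
  have hle_one : ∀ {κ B δ : ℝ},
      κ * sphMass b m o k = B → δ * B ≤ sphMass b m o k → κ * δ ≤ 1 :=
    fun hκ hδ => le_of_mul_le_mul_right (by rwa [one_mul, mul_right_comm, hκ, mul_comm]) hpos
  have hplus : kappaPlus b m o x * (F k - F (k + 1)) ^ 2 ≤ 1 :=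
    hle_one (kappaPlus_mul_sphMass hm hwss hconn hlf hk) ((hF k).trans (min_le_left _ _))
  have hminus : kappaMinus b m o x * (F k - F (k - 1)) ^ 2 ≤ 1 := by
    cases k with
    | zero => simp
    | succ j =>
      rw [Nat.add_sub_cancel, sub_sq_comm]
      exact hle_one (kappaMinus_mul_sphMass hb hm hwss hconn hlf hk)
        ((hF j).trans (min_le_right _ _))
  linarith

end Gradient

section Cutoff

noncomputable def cutoff (g : ℕ → ℝ) (n k : ℕ) : ℝ :=
  max (1 - ∑ r ∈ Finset.Ico n k, g r) 0

theorem cutoff_of_le (g : ℕ → ℝ) {n k : ℕ} (h : k ≤ n) : cutoff g n k = 1 := by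
  simp [cutoff, Finset.Ico_eq_empty_of_le h]

theorem abs_cutoff_sub_cutoff_succ_le {g : ℕ → ℝ} {k : ℕ} (hg : 0 ≤ g k) (n : ℕ) :
    |cutoff g n k - cutoff g n (k + 1)| ≤ g k := by
  rcases lt_or_ge k n with h | h
  · rwa [cutoff_of_le g h.le, cutoff_of_le g h, sub_self, abs_zero]
  · calc |cutoff g n k - cutoff g n (k + 1)|
        ≤ |(1 - ∑ r ∈ Finset.Ico n k, g r) - (1 - ∑ r ∈ Finset.Ico n (k + 1), g r)| :=
          abs_max_sub_max_le_abs _ _ _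
      _ = g k := by
          rw [Finset.sum_Ico_succ_top h, sub_sub_sub_cancel_left, add_sub_cancel_left,
            abs_of_nonneg hg]

theorem eventually_cutoff_eq_zero {g : ℕ → ℝ} (hg : ∀ k, 0 ≤ g k) (hdiv : ¬ Summable g)
    (n : ℕ) : ∀ᶠ k in atTop, cutoff g n k = 0 := by
  have hT := (not_summable_iff_tendsto_nat_atTop_of_nonneg hg).mp hdiv
  filter_upwards [hT.eventually_ge_atTop (∑ r ∈ Finset.range n, g r + 1),
    eventually_ge_atTop n] with k hk hnk
  rw [cutoff, Finset.sum_Ico_eq_sub g hnk]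
  exact max_eq_right (by linarith)

end Cutoff

theorem sq_sqrt_div_sqrt_mul_le {M : ℝ} (hM : 0 ≤ M) (B : ℝ) :
    (√M / √B) ^ 2 * B ≤ M := by
  rcases le_or_gt B 0 with hB | hB
  · rw [Real.sqrt_eq_zero'.mpr hB, div_zero]
    simp [hM]
  · rw [div_pow, Real.sq_sqrt hM, Real.sq_sqrt hB.le, div_mul_cancel₀ _ hB.ne']

/-- on a locally finite, connected, weakly spherically symmetric
graph, divergence of `∑_r √(min(m(S_r), m(S_{r+1})))/√(|∂B_r|)` yields finitely
supported radially symmetric cut-off functions `χ_n → 1` with `|∇χ_n|² ≤ 2`. -/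
theorem stmt_19 (b : X → X → ℝ) (m : X → ℝ) (o : X)
    (hb : IsGraph b) (hm : ∀ x, 0 < m x) (hlf : LocFin b)
    (hconn : GraphConnected b) (hwss : WSS b m o)
    (hdiv : ¬ Summable (fun r : ℕ =>
      Real.sqrt (min (sphMass b m o (r + 1)) (sphMass b m o (r + 2))) /
        Real.sqrt (bdry b o (r + 1)))) :
    ∃ χ : ℕ → X → ℝ,
      (∀ n, (Function.support (χ n)).Finite ∧ RadSymm b o (χ n) ∧
        ∀ x, (1 / m x) * ∑' y, b x y * (χ n x - χ n y) ^ 2 ≤ 2) ∧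
      ∀ x, Filter.Tendsto (fun n => χ n x) Filter.atTop (nhds 1) := by
  set w : ℕ → ℝ := fun k =>
    √(min (sphMass b m o k) (sphMass b m o (k + 1))) / √(bdry b o k)
  have hw0 : ∀ k, 0 ≤ w k := fun k => by positivity
  have hw : ¬ Summable w := fun h => hdiv ((summable_nat_add_iff 1).mpr h)
  have hbdry : ∀ k, 0 ≤ bdry b o k := fun k => tsum_nonneg fun p => hb.nonneg _ _
  have hmass : ∀ k, 0 ≤ sphMass b m o k := fun k => tsum_nonneg fun x => (hm x).le
  have hstep : ∀ n k, (cutoff w n k - cutoff w n (k + 1)) ^ 2 * bdry b o k ≤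
      min (sphMass b m o k) (sphMass b m o (k + 1)) := fun n k =>
    (mul_le_mul_of_nonneg_right
        (sq_le_sq.mpr ((abs_cutoff_sub_cutoff_succ_le (hw0 k) n).trans (le_abs_self _)))
        (hbdry k)).trans
      (sq_sqrt_div_sqrt_mul_le (le_min (hmass k) (hmass (k + 1))) _)
  refine ⟨fun n x => cutoff w n (combDist b o x), fun n => ⟨?_, ?_, ?_⟩, fun x => ?_⟩
  · exact finite_support_comp_combDist hconn hlf (eventually_cutoff_eq_zero hw0 hw n)
  · exact fun x y hxy => congrArg (cutoff w n) hxy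
  · exact radial_gradient_le_two hb hm hwss hconn hlf (hstep n)
  · exact tendsto_const_nhds.congr' <|
      (eventually_ge_atTop _).mono fun n hn => (cutoff_of_le w hn).symm
end
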